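/- Let n ≥ 1 and let φ(x) = c_1 + c_2 e_2(x) + c_3 e_3(x) + … + c_d e_d(x) be a real linear combination of the n-variate elementary symmetric polynomials (c_1,…,c_d ∈ ℝ). Then φ attains its minimum value over the probability simplex Δ_{n-1} at a point of multiplicity length one; equivalently, there exists k ∈ {1,…,n} such that φ(x̄_k) = min{φ(x) : x ∈ Δ_{n-1}}, where x̄_k := (0,…,0, 1/k,…,1/k) has exactly k coordinates equal to 1/k. -/

import Mathlib

/-- The `a`-th elementary symmetric polynomial in `n` variables, evaluated at `x`. -/
noncomputable def esymm (n a : ℕ) (x : Fin n → ℝ) : ℝ :=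
  ∑ s ∈ Finset.powersetCard a Finset.univ, ∏ j ∈ s, x j

/-- The point `x̄_k ∈ Δ_{n-1}` with exactly `k` coordinates equal to `1/k` and the rest `0`. -/
noncomputable def xbar (n k : ℕ) : Fin n → ℝ :=
  fun j => if (j : ℕ) < n - k then 0 else ((k : ℝ))⁻¹

lemma esymm_continuous (n a : ℕ) : Continuous (esymm n a) := by
  unfold esymm
  exact continuous_finset_sum _ fun s _ =>
    continuous_finset_prod _ fun j _ => continuous_apply j

lemma esymm_comp_perm (n a : ℕ) (x : Fin n → ℝ) (σ : Equiv.Perm (Fin n)) :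
    esymm n a (x ∘ σ) = esymm n a x := by
  classical
  unfold esymm
  refine Finset.sum_nbij' (fun s => s.image σ) (fun s => s.image σ.symm) ?_ ?_ ?_ ?_ ?_
  · intro s hs
    rw [Finset.mem_powersetCard] at hs ⊢
    exact ⟨Finset.subset_univ _, by rw [Finset.card_image_of_injective _ σ.injective, hs.2]⟩
  · intro s hs
    rw [Finset.mem_powersetCard] at hs ⊢
    exact ⟨Finset.subset_univ _, by rw [Finset.card_image_of_injective _ σ.symm.injective, hs.2]⟩
  · intro s _
    simp [Finset.image_image]
  · intro s _
    simp [Finset.image_image]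
  · intro s _
    rw [Finset.prod_image (fun a _ b _ h => σ.injective h)]
    rfl

lemma esymm_update_affine (n a : ℕ) (x : Fin n → ℝ) (i : Fin n) :
    ∃ p q : ℝ, ∀ u, esymm n a (Function.update x i u) = p + u * q := by
  classical
  refine ⟨∑ s ∈ (Finset.powersetCard a Finset.univ).filter (fun s => ¬ i ∈ s), ∏ j ∈ s, x j,
    ∑ s ∈ (Finset.powersetCard a Finset.univ).filter (fun s => i ∈ s), ∏ j ∈ s.erase i, x j, ?_⟩
  intro u
  unfold esymm
  rw [← Finset.sum_filter_add_sum_filter_not (Finset.powersetCard a Finset.univ)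
      (fun s => i ∈ s)]
  rw [add_comm]
  congr 1
  · refine Finset.sum_congr rfl fun s hs => ?_
    refine Finset.prod_congr rfl fun j hj => ?_
    have : j ≠ i := by
      rintro rfl; exact (Finset.mem_filter.1 hs).2 hj
    simp [Function.update_of_ne this]
  · rw [Finset.mul_sum]
    refine Finset.sum_congr rfl fun s hs => ?_
    have hi : i ∈ s := (Finset.mem_filter.1 hs).2
    rw [← Finset.mul_prod_erase s _ hi, Function.update_self]
    congr 1
    refine Finset.prod_congr rfl fun j hj => ?_
    exact Function.update_of_ne (Finset.ne_of_mem_erase hj) _ _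

lemma esymm_indicator (n a : ℕ) (A : Finset (Fin n)) (t : ℝ) :
    esymm n a (fun i => if i ∈ A then t else 0) = (A.card.choose a) * t ^ a := by
  classical
  unfold esymm
  have key : ∀ s ∈ Finset.powersetCard a (Finset.univ : Finset (Fin n)),
      (∏ j ∈ s, (if j ∈ A then t else 0)) = if s ⊆ A then t ^ a else 0 := by
    intro s hs
    by_cases h : s ⊆ A
    · rw [if_pos h]
      rw [Finset.prod_congr rfl (fun j hj => if_pos (h hj)), Finset.prod_const,
        (Finset.mem_powersetCard.1 hs).2]
    · rw [if_neg h]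
      obtain ⟨j, hjs, hjA⟩ := Finset.not_subset.1 h
      exact Finset.prod_eq_zero hjs (if_neg hjA)
  rw [Finset.sum_congr rfl key, Finset.sum_ite, Finset.sum_const, Finset.sum_const,
    smul_zero, add_zero]
  have : (Finset.powersetCard a (Finset.univ : Finset (Fin n))).filter (fun s => s ⊆ A)
      = Finset.powersetCard a A := by
    ext s
    simp [Finset.mem_powersetCard, and_comm]
  rw [this, Finset.card_powersetCard, nsmul_eq_mul]

lemma card_filter_val_lt (n m : ℕ) (h : m ≤ n) :
    ((Finset.univ : Finset (Fin n)).filter (fun j : Fin n => (j : ℕ) < m)).card = m := by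
  rcases lt_or_eq_of_le h with h' | h'
  · have heq : ((Finset.univ : Finset (Fin n)).filter (fun j : Fin n => (j : ℕ) < m))
        = Finset.Iio (⟨m, h'⟩ : Fin n) := by
      ext j; simp [Fin.lt_def]
    rw [heq, Fin.card_Iio]
  · subst h'
    rw [Finset.filter_true_of_mem (fun j _ => j.isLt), Finset.card_univ, Fintype.card_fin]

section Phi

variable (n d : ℕ) (c : ℕ → ℝ)

noncomputable def phiF : (Fin n → ℝ) → ℝ :=
  fun x => c 1 + ∑ a ∈ Finset.Icc 2 d, c a * esymm n a x

lemma phiF_continuous : Continuous (phiF n d c) := by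
  unfold phiF
  exact continuous_const.add (continuous_finset_sum _ fun a _ =>
    continuous_const.mul (esymm_continuous n a))

lemma phiF_comp_perm (x : Fin n → ℝ) (σ : Equiv.Perm (Fin n)) :
    phiF n d c (x ∘ σ) = phiF n d c x := by
  unfold phiF
  congr 1
  exact Finset.sum_congr rfl fun a _ => by rw [esymm_comp_perm]

lemma phiF_indicator (A : Finset (Fin n)) (t : ℝ) :
    phiF n d c (fun i => if i ∈ A then t else 0)
      = c 1 + ∑ a ∈ Finset.Icc 2 d, c a * ((A.card.choose a) * t ^ a) := by
  unfold phiF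
  congr 1
  exact Finset.sum_congr rfl fun a _ => by rw [esymm_indicator]

lemma phiF_update_affine (x : Fin n → ℝ) (i : Fin n) :
    ∃ p q : ℝ, ∀ u, phiF n d c (Function.update x i u) = p + u * q := by
  choose p q h using fun a => esymm_update_affine n a x i
  refine ⟨c 1 + ∑ a ∈ Finset.Icc 2 d, c a * p a, ∑ a ∈ Finset.Icc 2 d, c a * q a, fun u => ?_⟩
  unfold phiF
  rw [Finset.sum_congr rfl (fun a _ => by rw [h a u]; ring :
    ∀ a ∈ Finset.Icc 2 d, c a * esymm n a (Function.update x i u)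
      = c a * p a + u * (c a * q a))]
  rw [Finset.sum_add_distrib, ← Finset.mul_sum]
  ring

lemma affine_eval {f : ℝ → ℝ} (hf : ∃ p q, ∀ u, f u = p + u * q) (u : ℝ) :
    f u = f 0 + u * (f 1 - f 0) := by
  obtain ⟨p, q, h⟩ := hf
  rw [h u, h 0, h 1]; ring

lemma phiF_pair (x : Fin n → ℝ) {i j : Fin n} (hij : i ≠ j) :
    ∃ A B D : ℝ, ∀ u v : ℝ,
      phiF n d c (Function.update (Function.update x i u) j v)
        = A + B * (u + v) + D * (u * v) := by
  classical
  set Φ : ℝ → ℝ → ℝ := fun u v => phiF n d c (Function.update (Function.update x i u) j v)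
    with hΦ
  have haffv : ∀ u, ∃ p q, ∀ v, Φ u v = p + v * q := fun u =>
    phiF_update_affine n d c (Function.update x i u) j
  have haffu : ∀ v, ∃ p q, ∀ u, Φ u v = p + u * q := by
    intro v
    obtain ⟨p, q, h⟩ := phiF_update_affine n d c (Function.update x j v) i
    refine ⟨p, q, fun u => ?_⟩
    show phiF n d c (Function.update (Function.update x i u) j v) = p + u * q
    rw [Function.update_comm hij]; exact h u
  have hswap : ∀ u v, Φ u v = Φ v u := by
    intro u v
    have hfun : Function.update (Function.update x i u) j v
        = (Function.update (Function.update x i v) j u) ∘ (Equiv.swap i j) := by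
      funext k
      simp only [Function.comp_apply]
      rcases eq_or_ne k j with rfl | hkj
      · rw [Function.update_self, Equiv.swap_apply_right, Function.update_of_ne hij,
          Function.update_self]
      rcases eq_or_ne k i with rfl | hki
      · rw [Function.update_of_ne hij, Function.update_self, Equiv.swap_apply_left,
          Function.update_self]
      · rw [Function.update_of_ne hkj, Function.update_of_ne hki,
          Equiv.swap_apply_of_ne_of_ne hki hkj, Function.update_of_ne hkj,
          Function.update_of_ne hki]
    show phiF n d c (Function.update (Function.update x i u) j v) = Φ v u
    rw [hfun, phiF_comp_perm]
  have key : ∀ u v, Φ u v = Φ 0 0 + (Φ 1 0 - Φ 0 0) * u + (Φ 0 1 - Φ 0 0) * v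
      + (Φ 1 1 - Φ 1 0 - Φ 0 1 + Φ 0 0) * (u * v) := by
    intro u v
    have h1 : Φ u v = Φ 0 v + u * (Φ 1 v - Φ 0 v) :=
      affine_eval (f := fun u => Φ u v) (haffu v) u
    have h2 : Φ 0 v = Φ 0 0 + v * (Φ 0 1 - Φ 0 0) :=
      affine_eval (f := fun v => Φ 0 v) (haffv 0) v
    have h3 : Φ 1 v = Φ 1 0 + v * (Φ 1 1 - Φ 1 0) :=
      affine_eval (f := fun v => Φ 1 v) (haffv 1) v
    rw [h1, h2, h3]; ring
  have hBC : Φ 1 0 = Φ 0 1 := hswap 1 0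
  refine ⟨Φ 0 0, Φ 1 0 - Φ 0 0, Φ 1 1 - Φ 1 0 - Φ 0 1 + Φ 0 0, fun u v => ?_⟩
  show Φ u v = _
  rw [key u v, hBC]; ring

end Phi

lemma update_pair_mem_simplex {n : ℕ} {x : Fin n → ℝ} (hx : x ∈ stdSimplex ℝ (Fin n))
    {i j : Fin n} (hij : i ≠ j) {u v : ℝ} (hu : 0 ≤ u) (hv : 0 ≤ v)
    (hs : u + v = x i + x j) :
    Function.update (Function.update x i u) j v ∈ stdSimplex ℝ (Fin n) := by
  classical
  constructor
  · intro k
    rcases eq_or_ne k j with rfl | hkj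
    · simpa [Function.update_self] using hv
    rcases eq_or_ne k i with rfl | hki
    · simpa [Function.update_of_ne hkj, Function.update_self] using hu
    · simpa [Function.update_of_ne hkj, Function.update_of_ne hki] using hx.1 k
  · have hi : i ∈ (Finset.univ : Finset (Fin n)) \ {j} := by
      simp [hij]
    calc ∑ k, Function.update (Function.update x i u) j v k
        = v + ∑ k ∈ Finset.univ \ {j}, Function.update x i u k := by
          rw [Finset.sum_update_of_mem (Finset.mem_univ j)]
      _ = v + (u + ∑ k ∈ (Finset.univ \ {j}) \ {i}, x k) := by
          rw [Finset.sum_update_of_mem hi]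
      _ = (x i + x j) + ∑ k ∈ (Finset.univ \ {j}) \ {i}, x k := by
          rw [← hs]; ring
      _ = x j + (x i + ∑ k ∈ (Finset.univ \ {j}) \ {i}, x k) := by ring
      _ = x j + ∑ k ∈ Finset.univ \ {j}, x k := by
          rw [Finset.sum_eq_add_sum_sdiff_singleton_of_mem hi]
      _ = ∑ k, x k := by
          rw [Finset.sum_eq_add_sum_sdiff_singleton_of_mem (Finset.mem_univ j)]
      _ = 1 := hx.2


/-- **Lemma 5.2 (Bollobás).** A real linear combination `φ = c₁ + c₂e₂ + … + c_d e_d` of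
the `n`-variate elementary symmetric polynomials attains its minimum over the probability
simplex at a point of multiplicity length one, i.e. at some `x̄_k`, `k ∈ [n]`. -/
theorem esymm_combination_min_at_multiplicity_one (n d : ℕ) (hn : 1 ≤ n) (c : ℕ → ℝ) :
    ∃ k : ℕ, 1 ≤ k ∧ k ≤ n ∧
      ∀ x ∈ stdSimplex ℝ (Fin n),
        c 1 + ∑ a ∈ Finset.Icc 2 d, c a * esymm n a (xbar n k) ≤
          c 1 + ∑ a ∈ Finset.Icc 2 d, c a * esymm n a x := by
  classical
  have hne : (stdSimplex ℝ (Fin n)).Nonempty := by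
    refine ⟨fun _ => (n : ℝ)⁻¹, fun _ => by positivity, ?_⟩
    rw [Finset.sum_const, Finset.card_univ, Fintype.card_fin, nsmul_eq_mul]
    have : (n : ℝ) ≠ 0 := Nat.cast_ne_zero.2 (by omega)
    field_simp
  obtain ⟨z, hz, hzmin⟩ := (isCompact_stdSimplex ℝ (Fin n)).exists_isMinOn hne
    (phiF_continuous n d c).continuousOn
  have hzmin' : ∀ w ∈ stdSimplex ℝ (Fin n), phiF n d c z ≤ phiF n d c w :=
    fun w hw => hzmin hw
  have hP : ∃ m : ℕ, ∃ x, x ∈ stdSimplex ℝ (Fin n) ∧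
      (∀ w ∈ stdSimplex ℝ (Fin n), phiF n d c x ≤ phiF n d c w) ∧
      (Finset.univ.filter (fun i => x i ≠ 0)).card = m :=
    ⟨_, z, hz, hzmin', rfl⟩
  obtain ⟨y, hy, hymin, hym⟩ := Nat.find_spec hP
  -- all nonzero coordinates of y are equal
  have hpair : ∀ i j : Fin n, y i ≠ 0 → y j ≠ 0 → y i = y j := by
    intro i j hi0 hj0
    by_contra hne'
    have hij : i ≠ j := fun h => hne' (by rw [h])
    have hiy : 0 < y i := lt_of_le_of_ne (hy.1 i) (Ne.symm hi0)
    have hjy : 0 < y j := lt_of_le_of_ne (hy.1 j) (Ne.symm hj0)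
    have hspos : 0 < y i + y j := by positivity
    obtain ⟨A, B, D, hABD⟩ := phiF_pair n d c y hij
    have h0 : Function.update (Function.update y i (y i)) j (y j) = y := by
      rw [Function.update_eq_self, Function.update_eq_self]
    have hyeq : phiF n d c y = A + B * (y i + y j) + D * (y i * y j) := by
      conv_lhs => rw [← h0]
      exact hABD (y i) (y j)
    set w0 := Function.update (Function.update y i 0) j (y i + y j) with hw0
    have hw0mem : w0 ∈ stdSimplex ℝ (Fin n) :=
      update_pair_mem_simplex hy hij le_rfl hspos.le (by rw [zero_add])
    have hw0val : phiF n d c w0 = A + B * (0 + (y i + y j)) + D * (0 * (y i + y j)) :=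
      hABD 0 (y i + y j)
    set wm := Function.update (Function.update y i ((y i + y j)/2)) j ((y i + y j)/2) with hwm
    have hwmmem : wm ∈ stdSimplex ℝ (Fin n) :=
      update_pair_mem_simplex hy hij (by positivity) (by positivity) (by ring)
    have hwmval : phiF n d c wm
        = A + B * ((y i + y j)/2 + (y i + y j)/2)
          + D * ((y i + y j)/2 * ((y i + y j)/2)) :=
      hABD _ _
    have hsub : y i - y j ≠ 0 := sub_ne_zero.2 hne'
    have hsq : 0 < (y i - y j)^2 := by positivity
    have hprodpos : 0 < y i * y j := by positivity
    have hprodlt : y i * y j < (y i + y j)/2 * ((y i + y j)/2) := by nlinarith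
    have hkey : phiF n d c w0 ≤ phiF n d c y := by
      by_contra hgt
      push_neg at hgt
      have hD : D < 0 := by
        rw [hw0val, hyeq] at hgt; nlinarith
      have hlt : phiF n d c wm < phiF n d c y := by
        rw [hwmval, hyeq]; nlinarith
      exact absurd (hymin wm hwmmem) (not_le.2 hlt)
    have hw0min : ∀ w ∈ stdSimplex ℝ (Fin n), phiF n d c w0 ≤ phiF n d c w :=
      fun w hw => le_trans hkey (hymin w hw)
    have hset : Finset.univ.filter (fun k => w0 k ≠ 0)
        = (Finset.univ.filter (fun k => y k ≠ 0)).erase i := by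
      ext k
      simp only [Finset.mem_erase, Finset.mem_filter, Finset.mem_univ, true_and]
      rcases eq_or_ne k i with rfl | hki
      · simp [hw0, Function.update_of_ne hij, Function.update_self]
      rcases eq_or_ne k j with rfl | hkj
      · simp [hw0, Function.update_self, hspos.ne', hj0, Ne.symm hij]
      · simp [hw0, Function.update_of_ne hkj, Function.update_of_ne hki, hki]
    have hsupp : (Finset.univ.filter (fun k => w0 k ≠ 0)).card < Nat.find hP := by
      rw [hset, ← hym]
      exact Finset.card_erase_lt_of_mem (by simp [hi0])
    exact Nat.find_min hP hsupp ⟨w0, hw0mem, hw0min, rfl⟩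
  -- y is an indicator function
  set A := Finset.univ.filter (fun i => y i ≠ 0) with hA
  set k := A.card with hk
  have hsum : ∑ i, y i = 1 := hy.2
  have hk1 : 1 ≤ k := by
    rcases Nat.eq_zero_or_pos k with h0 | h
    · exfalso
      have hAempty : A = ∅ := Finset.card_eq_zero.1 h0
      have hzero : ∀ i, y i = 0 := by
        intro i
        by_contra hi
        have hiA : i ∈ A := Finset.mem_filter.2 ⟨Finset.mem_univ i, hi⟩
        rw [hAempty] at hiA
        exact absurd hiA (Finset.notMem_empty i)
      rw [Finset.sum_congr rfl (fun i _ => hzero i), Finset.sum_const, smul_zero] at hsum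
      norm_num at hsum
    · exact h
  have hkn : k ≤ n := by
    rw [hk, hA]
    calc (Finset.univ.filter (fun i => y i ≠ 0)).card ≤ Finset.univ.card :=
      Finset.card_filter_le _ _
    _ = n := by rw [Finset.card_univ, Fintype.card_fin]
  have hAne : A.Nonempty := Finset.card_pos.1 (by omega)
  obtain ⟨i0, hi0A⟩ := hAne
  have hi0 : y i0 ≠ 0 := (Finset.mem_filter.1 hi0A).2
  have hconst : ∀ i ∈ A, y i = y i0 := fun i hiA =>
    hpair i i0 (Finset.mem_filter.1 hiA).2 hi0
  have hsumA : ∑ i ∈ A, y i = 1 := by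
    rw [← hsum]
    exact Finset.sum_filter_of_ne (fun i _ h => h)
  have hkt : (k : ℝ) * y i0 = 1 := by
    calc (k : ℝ) * y i0 = ∑ _i ∈ A, y i0 := by rw [Finset.sum_const, nsmul_eq_mul, hk]
    _ = ∑ i ∈ A, y i := Finset.sum_congr rfl fun i hi => (hconst i hi).symm
    _ = 1 := hsumA
  have hkne : (k : ℝ) ≠ 0 := Nat.cast_ne_zero.2 (by omega)
  have ht : y i0 = (k : ℝ)⁻¹ := by
    field_simp
    linarith [hkt]
  have hyind : y = fun i => if i ∈ A then (k : ℝ)⁻¹ else 0 := by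
    funext i
    by_cases hiA : i ∈ A
    · rw [if_pos hiA, ← ht]
      exact hconst i hiA
    · rw [if_neg hiA]
      by_contra h
      exact hiA (Finset.mem_filter.2 ⟨Finset.mem_univ i, h⟩)
  -- xbar is an indicator function with the same value and support size
  set B := Finset.univ.filter (fun j : Fin n => ¬ (j : ℕ) < n - k) with hB
  have hxind : xbar n k = fun i => if i ∈ B then (k : ℝ)⁻¹ else 0 := by
    funext i
    simp only [xbar, hB, Finset.mem_filter, Finset.mem_univ, true_and]
    by_cases h : (i : ℕ) < n - k
    · rw [if_pos h, if_neg (not_not_intro h)]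
    · rw [if_neg h, if_pos h]
  have hBcard : B.card = k := by
    have h1 := card_filter_val_lt n (n - k) (Nat.sub_le n k)
    have h2 : ((Finset.univ : Finset (Fin n)).filter (fun j : Fin n => (j : ℕ) < n - k)).card
        + B.card = n := by
      rw [hB, Finset.card_filter_add_card_filter_not, Finset.card_univ,
        Fintype.card_fin]
    omega
  refine ⟨k, hk1, hkn, fun x hx => ?_⟩
  have h1 : phiF n d c (xbar n k) = phiF n d c y := by
    rw [hxind, hyind, phiF_indicator, phiF_indicator, hBcard, ← hk]
  have h2 : phiF n d c y ≤ phiF n d c x := hymin x hx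
  show phiF n d c (xbar n k) ≤ phiF n d c x
  rw [h1]
  exact h2
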